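/- arXiv:hep-th/0305189 — 2 statements merged into one kernel-verified Lean document; each statement's English description precedes it below -/
import Mathlib

section
/- Let M be an N-periodic infinite symmetric tridiagonal matrix with nonzero off-diagonal entries. If X is an N-periodic infinite symmetric matrix of maximal degree k commuting with M, then X = A(M) for some polynomial A of degree at most k. -/
/-!
Commuting with the tridiagonal `M` forces the top diagonal of a matrix `X` of maximal degree `k`
to satisfy the first-order recursion `X i (i + k) * y (i + k) = y i * X (i + 1) (i + 1 + k)`.
The top diagonal of `M ^ k` satisfies the same recursion and never vanishes (its entries are
`y i ⋯ y (i + k - 1)`), so `X - a • M ^ k` has maximal degree `k - 1` for a constant `a`. The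
difference is still symmetric and commutes with `M`, so induction on `k` ends at maximal
degree `-1`, where a symmetric matrix is zero.
-/

namespace Toda

/-- Infinite ℤ×ℤ matrices over ℂ. -/
abbrev Mat : Type := ℤ → ℤ → ℂ

/-- Matrix multiplication (entrywise `tsum`; for band-type matrices these sums
are finitely supported). -/
noncomputable def mul (X Y : Mat) : Mat := fun i j => ∑' k : ℤ, X i k * Y k j

/-- Commutator. -/
noncomputable def comm (X Y : Mat) : Mat := mul X Y - mul Y X

/-- Strictly upper triangular part. -/
def upper (X : Mat) : Mat := fun i j => if i < j then X i j else 0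

/-- Strictly lower triangular part. -/
def lower (X : Mat) : Mat := fun i j => if j < i then X i j else 0

/-- Diagonal part. -/
def diagPart (X : Mat) : Mat := fun i j => if i = j then X i j else 0

/-- Identity matrix. -/
def one : Mat := fun i j => if i = j then 1 else 0

/-- Matrix powers. -/
noncomputable def pow (X : Mat) : ℕ → Mat
  | 0 => one
  | m + 1 => mul X (pow X m)

/-- Evaluate a polynomial on a matrix. -/
noncomputable def evalPoly (A : Polynomial ℂ) (X : Mat) : Mat :=
  ∑ m ∈ Finset.range (A.natDegree + 1), A.coeff m • pow X m

/-- `N`-periodicity of entries. -/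
def Periodic (N : ℕ) (X : Mat) : Prop := ∀ i j, X (i + N) (j + N) = X i j

/-- `X` has (pure) degree `k`: nonzero entries only on diagonal `j = i + k`. -/
def HasDegree (k : ℤ) (X : Mat) : Prop := ∀ i j, X i j ≠ 0 → j = i + k

/-- `X` has maximal degree `k`: entries vanish above diagonal `k`. -/
def MaxDeg (k : ℤ) (X : Mat) : Prop := ∀ i j, X i j ≠ 0 → j - i ≤ k

/-- The infinite symmetric tridiagonal Toda Lax matrix with diagonal `φ` and
off-diagonal entries `y`. -/
def todaM (φ y : ℤ → ℂ) : Mat := fun i j =>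
  if j = i then φ i
  else if j = i + 1 then y i
  else if i = j + 1 then y j
  else 0

/-- Degree-`r` component of a matrix. -/
def topPart (r : ℤ) (X : Mat) : Mat := fun i j => if j = i + r then X i j else 0

/-- Inverse of the degree-`r` component (a matrix of degree `-r`). -/
noncomputable def topInv (r : ℤ) (X : Mat) : Mat :=
  fun i j => if j = i - r then (X j (j + r))⁻¹ else 0

/-- Entrywise geometric series `Σ_{k≥0} (-1)^k Q^k`, which is a finite sum in
each entry when `Q` has maximal degree `≤ -1`. -/
noncomputable def geomSeries (Q : Mat) : Mat :=
  fun i j => ∑ m ∈ Finset.range ((i - j).toNat + 1), (-1 : ℂ) ^ m * pow Q m i j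

/-- The inverse `R⁻¹ = (R^{(r)})⁻¹ Σ_{k≥0} (-1)^k (R̃ (R^{(r)})⁻¹)^k` of a matrix
of maximal degree `r` with invertible top component. -/
noncomputable def geomInv (r : ℤ) (R : Mat) : Mat :=
  mul (topInv r R) (geomSeries (mul (R - topPart r R) (topInv r R)))

/-- Integer powers of a matrix, negative powers via the geometric-series inverse. -/
noncomputable def intPow (X : Mat) (m : ℤ) : Mat :=
  if 0 ≤ m then pow X m.toNat else pow (geomInv 1 X) (-m).toNat

/-- Shift operator `Z = D^N`. -/
def shiftZ (N : ℕ) : Mat := fun i j => if j = i + N then 1 else 0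

/-- Inverse shift `Z⁻¹`. -/
def shiftZinv (N : ℕ) : Mat := fun i j => if j = i - N then 1 else 0

/-- The finite `N×N` periodic Toda Lax matrix with spectral parameter `z`,
diagonal `p`, off-diagonal entries `y 1, …, y (N-1)` and corner entries
`y 0 * z`, `y 0 * z⁻¹`. -/
noncomputable def laxFin (N : ℕ) (p y : ℕ → ℂ) (z : ℂ) :
    Matrix (Fin N) (Fin N) ℂ := fun i j =>
  if (i : ℕ) = j then p i
  else if (j : ℕ) = i + 1 then y (i + 1)
  else if (i : ℕ) = j + 1 then y (j + 1)
  else if (i : ℕ) = 0 ∧ (j : ℕ) = N - 1 then y 0 * z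
  else if (i : ℕ) = N - 1 ∧ (j : ℕ) = 0 then y 0 * z⁻¹
  else 0

/-- Embedding of polynomials in `x` into the field `ℂ((x⁻¹))` of Laurent series
at infinity, sending `x` to the inverse of the local parameter. -/
noncomputable def atInf (p : Polynomial ℂ) : LaurentSeries ℂ :=
  Polynomial.eval₂ HahnSeries.C (HahnSeries.single (-1 : ℤ) 1) p

lemma MaxDeg.apply_eq_zero {k : ℤ} {X : Mat} (hX : MaxDeg k X) {i j : ℤ} (h : k < j - i) :
    X i j = 0 := by
  by_contra hne
  exact absurd (hX i j hne) (not_le.mpr h)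

lemma MaxDeg.eq_zero_of_symm {k : ℤ} {X : Mat} (hX : MaxDeg k X) (hk : k < 0)
    (hsymm : ∀ i j, X i j = X j i) : X = 0 := by
  funext i j
  rcases le_total i j with h | h
  · exact hX.apply_eq_zero (by omega)
  · rw [hsymm]
    exact hX.apply_eq_zero (by omega)

lemma comm_eq_zero_iff (X Y : Mat) : comm X Y = 0 ↔ ∀ i j, mul X Y i j = mul Y X i j := by
  simp only [comm, funext_iff, sub_eq_zero]

lemma mul_one_eq_self (X : Mat) : mul X one = X := by
  funext i j
  simp [mul, one]

lemma one_mul_eq_self (X : Mat) : mul one X = X := by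
  funext i j
  simp [mul, one]

lemma tsum_eq_of_eq_zero_off_three {f : ℤ → ℂ} (j : ℤ)
    (hf : ∀ t, t ≠ j - 1 → t ≠ j → t ≠ j + 1 → f t = 0) :
    ∑' t, f t = f (j - 1) + f j + f (j + 1) := by
  rw [tsum_eq_sum (s := {j - 1, j, j + 1}) (by simpa using hf)]
  rw [Finset.sum_insert (by simp; omega), Finset.sum_insert (by simp), Finset.sum_singleton,
    add_assoc]

lemma exists_eq_const_mul_of_mul_succ_eq {K : Type*} [Field K] {u v : ℤ → K}
    (hv : ∀ i, v i ≠ 0) (h : ∀ i, u (i + 1) * v i = u i * v (i + 1)) :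
    ∃ a, ∀ i, u i = a * v i := by
  have hper : Function.Periodic (fun i => u i / v i) 1 := fun i => by
    simp only [div_eq_div_iff (hv _) (hv _), h]
  refine ⟨u 0 / v 0, fun i => ?_⟩
  have hi := hper.int_mul_eq i
  simp only [mul_one, Int.cast_id] at hi
  rw [← hi, div_mul_cancel₀ _ (hv i)]

lemma evalPoly_eq_sum (A : Polynomial ℂ) (X : Mat) :
    evalPoly A X = A.sum fun m a => a • pow X m :=
  (A.sum_over_range (f := fun m a => a • pow X m) fun _ => zero_smul ℂ _).symm

lemma evalPoly_add (A B : Polynomial ℂ) (X : Mat) :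
    evalPoly (A + B) X = evalPoly A X + evalPoly B X := by
  simp only [evalPoly_eq_sum]
  exact Polynomial.sum_add_index _ _ _ (fun _ => zero_smul ℂ _) fun _ _ _ => add_smul _ _ _

lemma evalPoly_C_mul_X_pow (a : ℂ) (m : ℕ) (X : Mat) :
    evalPoly (Polynomial.C a * Polynomial.X ^ m) X = a • pow X m := by
  rw [evalPoly_eq_sum, Polynomial.C_mul_X_pow_eq_monomial,
    Polynomial.sum_monomial_index _ _ (zero_smul ℂ _)]

section Lax

variable (φ y : ℤ → ℂ)

lemma todaM_apply_eq_zero {i j : ℤ} (h₁ : j ≠ i) (h₂ : j ≠ i + 1) (h₃ : i ≠ j + 1) :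
    todaM φ y i j = 0 := by
  simp [todaM, h₁, h₂, h₃]

lemma mul_todaM (X : Mat) (i j : ℤ) :
    mul X (todaM φ y) i j = X i (j - 1) * y (j - 1) + X i j * φ j + X i (j + 1) * y j := by
  rw [mul, tsum_eq_of_eq_zero_off_three j fun t h₁ h₂ h₃ => by
    rw [todaM_apply_eq_zero φ y (by omega) (by omega) (by omega), mul_zero]]
  simp [todaM, show j ≠ j - 1 by omega, show j ≠ j + 1 + 1 by omega]

lemma todaM_mul (X : Mat) (i j : ℤ) :
    mul (todaM φ y) X i j = y (i - 1) * X (i - 1) j + φ i * X i j + y i * X (i + 1) j := by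
  rw [mul, tsum_eq_of_eq_zero_off_three i fun t h₁ h₂ h₃ => by
    rw [todaM_apply_eq_zero φ y (by omega) (by omega) (by omega), zero_mul]]
  simp [todaM, show i - 1 ≠ i + 1 by omega]

lemma mul_assoc_todaM (X : Mat) :
    mul (todaM φ y) (mul X (todaM φ y)) = mul (mul (todaM φ y) X) (todaM φ y) := by
  funext i j
  simp only [mul_todaM, todaM_mul]
  ring

lemma comm_sub_smul_todaM (X Y : Mat) (a : ℂ) :
    comm (X - a • Y) (todaM φ y) = comm X (todaM φ y) - a • comm Y (todaM φ y) := by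
  funext i j
  simp only [comm, Pi.sub_apply, Pi.smul_apply, smul_eq_mul, mul_todaM, todaM_mul]
  ring

lemma todaM_mul_pow (m : ℕ) :
    mul (todaM φ y) (pow (todaM φ y) m) = mul (pow (todaM φ y) m) (todaM φ y) := by
  induction m with
  | zero => rw [pow, mul_one_eq_self, one_mul_eq_self]
  | succ m ih => rw [pow, ih, mul_assoc_todaM, ← ih]

lemma comm_pow_todaM (m : ℕ) : comm (pow (todaM φ y) m) (todaM φ y) = 0 :=
  (comm_eq_zero_iff _ _).2 fun i j => by rw [todaM_mul_pow]

lemma pow_todaM_symm (m : ℕ) (i j : ℤ) : pow (todaM φ y) m i j = pow (todaM φ y) m j i := by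
  induction m generalizing i j with
  | zero => simp only [pow, one, eq_comm]
  | succ m ih =>
    rw [pow, todaM_mul, todaM_mul_pow, mul_todaM, ih (i - 1), ih i, ih (i + 1)]
    ring

lemma maxDeg_pow_todaM (m : ℕ) : MaxDeg m (pow (todaM φ y) m) := by
  induction m with
  | zero =>
    intro i j h
    simp only [pow, one, ne_eq, ite_eq_right_iff, one_ne_zero, imp_false, not_not] at h
    omega
  | succ m ih =>
    intro i j h
    by_contra hlt
    rw [pow, todaM_mul, ih.apply_eq_zero (by omega), ih.apply_eq_zero (by omega),
      ih.apply_eq_zero (by omega)] at h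
    simp at h

lemma pow_todaM_apply_add_ne_zero (hy0 : ∀ i, y i ≠ 0) (m : ℕ) (i : ℤ) :
    pow (todaM φ y) m i (i + m) ≠ 0 := by
  induction m generalizing i with
  | zero => simp [pow, one]
  | succ m ih =>
    have hm := maxDeg_pow_todaM φ y m
    rw [pow, todaM_mul, hm.apply_eq_zero (by omega), hm.apply_eq_zero (by omega),
      show i + ((m + 1 : ℕ) : ℤ) = i + 1 + m by push_cast; ring]
    simpa using mul_ne_zero (hy0 i) (ih (i + 1))

lemma MaxDeg.top_recursion_of_comm_todaM {k : ℤ} {X : Mat} (hX : MaxDeg k X)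
    (hc : comm X (todaM φ y) = 0) (i : ℤ) :
    X i (i + k) * y (i + k) = y i * X (i + 1) (i + 1 + k) := by
  have h := (comm_eq_zero_iff _ _).1 hc i (i + k + 1)
  rw [mul_todaM, todaM_mul, hX.apply_eq_zero (i := i) (j := i + k + 1) (by omega),
    hX.apply_eq_zero (i := i) (j := i + k + 1 + 1) (by omega),
    hX.apply_eq_zero (i := i - 1) (j := i + k + 1) (by omega), add_sub_cancel_right,
    add_right_comm i k 1] at h
  linear_combination h

lemma exists_maxDeg_sub_smul_pow_todaM (hy0 : ∀ i, y i ≠ 0) {k : ℕ} {X : Mat}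
    (hX : MaxDeg k X) (hc : comm X (todaM φ y) = 0) :
    ∃ a : ℂ, MaxDeg (k - 1) (X - a • pow (todaM φ y) k) := by
  have hP := maxDeg_pow_todaM φ y k
  obtain ⟨a, ha⟩ := exists_eq_const_mul_of_mul_succ_eq (u := fun i => X i (i + k))
    (pow_todaM_apply_add_ne_zero φ y hy0 k) fun i => by
      have hu := hX.top_recursion_of_comm_todaM φ y hc i
      have hv := hP.top_recursion_of_comm_todaM φ y (comm_pow_todaM φ y k) i
      apply mul_left_cancel₀ (hy0 i)
      linear_combination (-pow (todaM φ y) k i (i + k)) * hu + X i (i + k) * hv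
  refine ⟨a, fun i j hij => ?_⟩
  by_contra hlt
  simp only [Pi.sub_apply, Pi.smul_apply, smul_eq_mul] at hij
  obtain rfl | hlt' : j = i + k ∨ (k : ℤ) < j - i := by omega
  · exact hij (sub_eq_zero.2 (ha i))
  · rw [hX.apply_eq_zero hlt', hP.apply_eq_zero hlt', mul_zero, sub_zero] at hij
    exact hij rfl

lemma exists_symm_commutant_sub_smul_pow_todaM (hy0 : ∀ i, y i ≠ 0) {k : ℕ}
    {X : Mat} (hdeg : MaxDeg k X) (hsym : ∀ i j, X i j = X j i)
    (hc : comm X (todaM φ y) = 0) :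
    ∃ a : ℂ, MaxDeg (k - 1) (X - a • pow (todaM φ y) k) ∧
      (∀ i j, (X - a • pow (todaM φ y) k) i j = (X - a • pow (todaM φ y) k) j i) ∧
      comm (X - a • pow (todaM φ y) k) (todaM φ y) = 0 := by
  obtain ⟨a, ha⟩ := exists_maxDeg_sub_smul_pow_todaM φ y hy0 hdeg hc
  refine ⟨a, ha, fun i j => ?_, ?_⟩
  · simp only [Pi.sub_apply, Pi.smul_apply, hsym i j, pow_todaM_symm φ y k i j]
  · rw [comm_sub_smul_todaM, hc, comm_pow_todaM, smul_zero, sub_zero]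

end Lax

theorem symmetric_commutant_is_polynomial_general
    (φ y : ℤ → ℂ)
    (hy0 : ∀ i, y i ≠ 0)
    (k : ℕ) (X : Mat) (hXdeg : MaxDeg k X)
    (hXsym : ∀ i j, X i j = X j i)
    (hcomm : comm X (todaM φ y) = 0) :
    ∃ A : Polynomial ℂ, A.natDegree ≤ k ∧ X = evalPoly A (todaM φ y) := by
  induction k generalizing X with
  | zero =>
    obtain ⟨a, hdeg, hsym, -⟩ :=
      exists_symm_commutant_sub_smul_pow_todaM φ y hy0 hXdeg hXsym hcomm
    refine ⟨_, Polynomial.natDegree_C_mul_X_pow_le a 0, ?_⟩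
    rw [evalPoly_C_mul_X_pow, ← sub_eq_zero]
    exact hdeg.eq_zero_of_symm (by norm_num) hsym
  | succ k ih =>
    obtain ⟨a, hdeg, hsym, hc⟩ :=
      exists_symm_commutant_sub_smul_pow_todaM φ y hy0 hXdeg hXsym hcomm
    obtain ⟨A, hA, hXA⟩ := ih _ (by simpa using hdeg) hsym hc
    refine ⟨A + Polynomial.C a * Polynomial.X ^ (k + 1),
      Polynomial.natDegree_add_le_of_degree_le (hA.trans k.le_succ)
        (Polynomial.natDegree_C_mul_X_pow_le a _), ?_⟩
    rw [evalPoly_add, evalPoly_C_mul_X_pow, ← hXA, sub_add_cancel]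

/-- a periodic symmetric matrix of maximal degree `k` commuting
with the Toda Lax matrix `M` is a polynomial in `M` of degree at most `k`. -/
theorem symmetric_commutant_is_polynomial
    (N : ℕ) (hN : 0 < N) (φ y : ℤ → ℂ)
    (hφ : ∀ i, φ (i + N) = φ i) (hy : ∀ i, y (i + N) = y i)
    (hy0 : ∀ i, y i ≠ 0)
    (k : ℕ) (X : Mat) (hXper : Periodic N X) (hXdeg : MaxDeg k X)
    (hXsym : ∀ i j, X i j = X j i)
    (hcomm : comm X (todaM φ y) = 0) :
    ∃ A : Polynomial ℂ, A.natDegree ≤ k ∧ X = evalPoly A (todaM φ y) :=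
  symmetric_commutant_is_polynomial_general φ y hy0 k X hXdeg hXsym hcomm

end Toda
end

section
/- Let T(x) be a monic square-free polynomial of degree 2k and W' a polynomial of degree n with k ≤ n. Suppose W'(x)² = T(x)G(x)² − f(x) with deg G = n−k and deg f ≤ n−1, where the leading coefficients of W' and G·(leading part of √T) agree. Then conversely Res_{x=∞}(x^{j−1}W'(x)/√T(x)) = 0 for j = 1, …, k. -/
namespace HahnSeries

section LinearOrder

variable {Γ R : Type*} [LinearOrder Γ] [Zero Γ]

theorem order_eq_of_coeff_ne_zero_of_forall_lt [Zero R] {x : HahnSeries Γ R} {i : Γ}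
    (hi : x.coeff i ≠ 0) (h : ∀ j < i, x.coeff j = 0) : x.order = i :=
  le_antisymm (order_le_of_coeff_ne_zero hi)
    ((le_order_iff_forall (ne_zero_of_coeff_ne_zero hi)).mpr h)

variable [AddMonoid R] {x y : HahnSeries Γ R}

theorem coeff_order_add_of_order_eq (h : x.order = y.order) :
    (x + y).coeff x.order = x.leadingCoeff + y.leadingCoeff := by
  rw [coeff_add, ← leadingCoeff_eq, h, ← leadingCoeff_eq]

theorem add_ne_zero_of_order_eq (h : x.order = y.order)
    (hc : x.leadingCoeff + y.leadingCoeff ≠ 0) : x + y ≠ 0 :=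
  ne_zero_of_coeff_ne_zero ((coeff_order_add_of_order_eq h).trans_ne hc)

theorem order_add_of_order_eq (h : x.order = y.order)
    (hc : x.leadingCoeff + y.leadingCoeff ≠ 0) : (x + y).order = x.order := by
  refine order_eq_of_coeff_ne_zero_of_forall_lt ((coeff_order_add_of_order_eq h).trans_ne hc)
    fun j hj => ?_
  rw [coeff_add, coeff_eq_zero_of_lt_order hj, coeff_eq_zero_of_lt_order (h ▸ hj), add_zero]

end LinearOrder

theorem coeff_eq_zero_of_add_order_lt_orderTop_mul {Γ R : Type*} [AddCommMonoid Γ]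
    [LinearOrder Γ] [IsOrderedCancelAddMonoid Γ] [Ring R] [NoZeroDivisors R]
    {u v : HahnSeries Γ R} (hv : v ≠ 0) {i : Γ}
    (hi : ((i + v.order : Γ) : WithTop Γ) < (u * v).orderTop) : u.coeff i = 0 := by
  rw [orderTop_mul, ← order_eq_orderTop_of_ne_zero hv, WithTop.coe_add,
    WithTop.add_lt_add_iff_right WithTop.coe_ne_top] at hi
  exact coeff_eq_zero_of_lt_orderTop hi

section Field

variable {Γ K : Type*} [AddCommGroup Γ] [LinearOrder Γ] [IsOrderedAddMonoid Γ] [Field K]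

theorem order_div {x y : HahnSeries Γ K} (hx : x ≠ 0) (hy : y ≠ 0) :
    (x / y).order = x.order - y.order := by
  rw [eq_sub_iff_add_eq, ← order_mul (div_ne_zero hx hy) hy, div_mul_cancel₀ x hy]

theorem leadingCoeff_div (x y : HahnSeries Γ K) :
    (x / y).leadingCoeff = x.leadingCoeff / y.leadingCoeff := by
  rcases eq_or_ne y 0 with rfl | hy
  · simp
  · rw [eq_div_iff (leadingCoeff_ne_zero.mpr hy), ← leadingCoeff_mul, div_mul_cancel₀ x hy]

end Field

end HahnSeries

namespace Toda

open scoped Polynomial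
open HahnSeries

theorem atInf_eq_eval₂RingHom :
    atInf = Polynomial.eval₂RingHom (C : ℂ →+* LaurentSeries ℂ) (single (-1 : ℤ) 1) :=
  rfl

theorem atInf_monomial (e : ℕ) (c : ℂ) :
    atInf (Polynomial.monomial e c) = single (-(e : ℤ)) c := by
  simp [atInf, single_pow]

theorem coeff_atInf (p : ℂ[X]) (m : ℤ) :
    (atInf p).coeff m = if m ≤ 0 then p.coeff (-m).toNat else 0 := by
  induction p using Polynomial.induction_on' with
  | add p q hp hq =>
    rw [atInf_eq_eval₂RingHom, map_add, HahnSeries.coeff_add, ← atInf_eq_eval₂RingHom, hp, hq]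
    split_ifs <;> simp
  | monomial e c =>
    simp only [atInf_monomial, coeff_single, Polynomial.coeff_monomial]
    split_ifs <;> first | rfl | omega

theorem coeff_atInf_of_pos (p : ℂ[X]) {m : ℤ} (hm : 0 < m) : (atInf p).coeff m = 0 := by
  rw [coeff_atInf, if_neg hm.not_ge]

theorem coeff_atInf_of_lt_neg_natDegree (p : ℂ[X]) {m : ℤ} (hm : m < -(p.natDegree : ℤ)) :
    (atInf p).coeff m = 0 := by
  rw [coeff_atInf, if_pos (by omega), Polynomial.coeff_eq_zero_of_natDegree_lt (by omega)]

theorem coeff_atInf_neg_natDegree (p : ℂ[X]) :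
    (atInf p).coeff (-(p.natDegree : ℤ)) = p.leadingCoeff := by
  rw [coeff_atInf, if_pos (by omega), neg_neg, Int.toNat_natCast, Polynomial.leadingCoeff]

theorem order_atInf {p : ℂ[X]} (hp : p ≠ 0) : (atInf p).order = -(p.natDegree : ℤ) :=
  order_eq_of_coeff_ne_zero_of_forall_lt
    (by rwa [coeff_atInf_neg_natDegree, Polynomial.leadingCoeff_ne_zero])
    fun _ => coeff_atInf_of_lt_neg_natDegree p

theorem neg_natDegree_le_orderTop_atInf (p : ℂ[X]) :
    ((-p.natDegree : ℤ) : WithTop ℤ) ≤ (atInf p).orderTop :=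
  le_orderTop_iff_forall.mpr fun _ hm =>
    coeff_atInf_of_lt_neg_natDegree p (WithTop.coe_lt_coe.mp hm)

theorem leadingCoeff_atInf (p : ℂ[X]) : (atInf p).leadingCoeff = p.leadingCoeff := by
  rcases eq_or_ne p 0 with rfl | hp
  · simp [atInf]
  · rw [HahnSeries.leadingCoeff_eq, order_atInf hp, coeff_atInf_neg_natDegree]

theorem atInf_ne_zero {p : ℂ[X]} (hp : p ≠ 0) : atInf p ≠ 0 := by
  rwa [← HahnSeries.leadingCoeff_ne_zero, leadingCoeff_atInf, Polynomial.leadingCoeff_ne_zero]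

theorem sub_mul_add_mul_atInf_eq {T W G f : ℂ[X]} {s : LaurentSeries ℂ} (hs : s ≠ 0)
    (hs2 : s * s = atInf T) (hfac : W ^ 2 = T * G ^ 2 - f) :
    (atInf W / s - atInf G) * ((atInf W / s + atInf G) * atInf T) = -atInf f := by
  have h := congrArg atInf hfac
  simp only [atInf_eq_eval₂RingHom, map_pow, map_mul, map_sub] at h
  rw [← atInf_eq_eval₂RingHom, ← hs2, ← div_mul_cancel₀ (atInf W) hs] at h
  rw [← hs2]
  linear_combination h

theorem matrix_model_curve_gives_residue_conditions_general
    (k n : ℕ) (hkn : k ≤ n)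
    (T : Polynomial ℂ) (hTmonic : T.Monic) (hTdeg : T.natDegree = 2 * k)
    (s : LaurentSeries ℂ) (hs2 : s * s = atInf T)
    (hslead : s.coeff (-(k : ℤ)) = 1)
    (hsord : ∀ m : ℤ, m < -(k : ℤ) → s.coeff m = 0)
    (W' G f : Polynomial ℂ) (hW' : W'.natDegree = n)
    (hGdeg : G.natDegree = n - k) (hfdeg : f.natDegree ≤ n - 1)
    (hlead : W'.leadingCoeff = G.leadingCoeff)
    (hfac : W' ^ 2 = T * G ^ 2 - f) :
    ∀ j : ℕ, 1 ≤ j → j ≤ k → (atInf W' / s).coeff (j : ℤ) = 0 := by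
  intro j hj1 hjk
  have hW'0 : W' ≠ 0 := by rintro rfl; simp at hW'; omega
  have hG0 : G ≠ 0 := by
    rintro rfl
    exact hW'0 (Polynomial.leadingCoeff_eq_zero.mp (hlead.trans Polynomial.leadingCoeff_zero))
  have hs0 : s ≠ 0 := by rintro rfl; simp at hslead
  have hs : s.order = -k := order_eq_of_coeff_ne_zero_of_forall_lt (by simp [hslead]) hsord
  have hAG : (atInf W' / s).order = (atInf G).order := by
    rw [order_div (atInf_ne_zero hW'0) hs0, order_atInf hW'0, order_atInf hG0, hs, hW', hGdeg]
    omega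
  have hc : (atInf W' / s).leadingCoeff + (atInf G).leadingCoeff ≠ 0 := by
    rw [HahnSeries.leadingCoeff_div, leadingCoeff_eq (x := s), hs, hslead, div_one,
      leadingCoeff_atInf, leadingCoeff_atInf, ← hlead, ← two_mul]
    exact mul_ne_zero two_ne_zero (Polynomial.leadingCoeff_ne_zero.mpr hW'0)
  have hsum0 : atInf W' / s + atInf G ≠ 0 := add_ne_zero_of_order_eq hAG hc
  have hT0 : atInf T ≠ 0 := atInf_ne_zero hTmonic.ne_zero
  rw [← sub_add_cancel (atInf W' / s) (atInf G), HahnSeries.coeff_add,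
    coeff_atInf_of_pos _ (by omega), add_zero]
  refine coeff_eq_zero_of_add_order_lt_orderTop_mul (mul_ne_zero hsum0 hT0) ?_
  rw [sub_mul_add_mul_atInf_eq hs0 hs2 hfac, orderTop_neg, order_mul hsum0 hT0,
    order_add_of_order_eq hAG hc, hAG, order_atInf hG0, order_atInf hTmonic.ne_zero]
  refine lt_of_lt_of_le (WithTop.coe_lt_coe.mpr ?_) (neg_natDegree_le_orderTop_atInf f)
  omega

/-- converse direction: if `W'² = T G² − f` with matching degrees
and leading coefficients, then the `k` residue conditions for `W'/√T` hold. -/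
theorem matrix_model_curve_gives_residue_conditions
    (k n : ℕ) (hk : 0 < k) (hkn : k ≤ n)
    (T : Polynomial ℂ) (hTmonic : T.Monic) (hTdeg : T.natDegree = 2 * k)
    (hTsf : Squarefree T)
    (s : LaurentSeries ℂ) (hs2 : s * s = atInf T)
    (hslead : s.coeff (-(k : ℤ)) = 1)
    (hsord : ∀ m : ℤ, m < -(k : ℤ) → s.coeff m = 0)
    (W' G f : Polynomial ℂ) (hW' : W'.natDegree = n)
    (hGdeg : G.natDegree = n - k) (hfdeg : f.natDegree ≤ n - 1)
    (hlead : W'.leadingCoeff = G.leadingCoeff)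
    (hfac : W' ^ 2 = T * G ^ 2 - f) :
    ∀ j : ℕ, 1 ≤ j → j ≤ k → (atInf W' / s).coeff (j : ℤ) = 0 :=
  matrix_model_curve_gives_residue_conditions_general k n hkn T hTmonic hTdeg s hs2 hslead hsord W'
    G f hW' hGdeg hfdeg hlead hfac

end Toda
end
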